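/- Let 0 → L_1 → L → L_2 → 0 be a short exact sequence of finitely generated modules over a Noetherian local ring (A, m). Suppose that for every ε > 0 and each i = 1, 2 there exists N_i such that every submodule M_i ⊆ m^{N_i} L_i with length(L_i/M_i) < ∞ satisfies μ(M_i) < ε·length(L_i/M_i). Then for every ε > 0 there exists N such that every submodule M ⊆ m^N L with length(L/M) < ∞ satisfies μ(M) < ε·length(L/M). -/

import Mathlib

/-!
Put `M₁ = f⁻¹(M)` and `M₂ = g(M)`. Then `0 → L₁/M₁ → L/M → L₂/M₂ → 0` is exact, so the colength
of `M` is the sum of those of `M₁` and `M₂`, while lifting generators of `M₂` and adjoining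
generators of `M ∩ f(L₁) ≅ M₁` shows `μ(M) ≤ μ(M₁) + μ(M₂)`. Both `M₁` and `M₂` are deep when `M`
is: `M₂` trivially, and `M₁` by Artin–Rees, which gives `m^(n+k) L ∩ f(L₁) ⊆ m^n f(L₁)` for a
fixed `k`. Adding the two estimates for `M₁` and `M₂` gives the one for `M`.
-/

open IsLocalRing Filter

/-- Length of a module (as a natural number): the Krull dimension of its submodule lattice. -/
noncomputable def flength (R M : Type*) [Ring R] [AddCommGroup M] [Module R M] : ℕ :=
  ((Order.krullDim (Submodule R M)).unbotD 0).toNat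

/-- Minimal number of generators of a submodule. -/
noncomputable def mu (R : Type*) {M : Type*} [Ring R] [AddCommGroup M] [Module R M]
    (N : Submodule R M) : ℕ :=
  sInf {n | ∃ s : Finset M, s.card = n ∧ Submodule.span R (s : Set M) = N}

/-- Hilbert–Samuel multiplicity of an ideal in a `d`-dimensional local ring. -/
noncomputable def eMult (R : Type*) [CommRing R] (d : ℕ) (I : Ideal R) : ℝ :=
  Filter.limsup
    (fun n : ℕ => (d.factorial : ℝ) * (flength R (R ⧸ I ^ n) : ℝ) / (n : ℝ) ^ d)
    Filter.atTop

/-- An ideal of a local ring is `m`-primary. -/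
def IsMPrimary (R : Type*) [CommRing R] [IsLocalRing R] (I : Ideal R) : Prop :=
  I ≠ ⊤ ∧ ∃ k : ℕ, maximalIdeal R ^ k ≤ I

/-- A commutative ring is regular local. -/
def IsRegularLocal (A : Type*) [CommRing A] : Prop :=
  IsNoetherianRing A ∧ ∃ _ : IsLocalRing A,
    ringKrullDim A = (mu A (IsLocalRing.maximalIdeal A) : WithBot ℕ∞)

/-- Length of `J/I` for ideals `I ≤ J`. -/
noncomputable def qlen (R : Type*) [CommRing R] (I J : Ideal R) : ℕ :=
  flength R (Submodule.map (Submodule.mkQ (I : Submodule R R)) (J : Submodule R R))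

theorem mu_eq_spanFinrank {R M : Type*} [Ring R] [AddCommGroup M] [Module R M]
    (N : Submodule R M) : mu R N = N.spanFinrank := by
  rw [Submodule.spanFinrank_eq_iInf, mu, iInf, Set.range]
  congr 1
  ext n
  exact ⟨fun ⟨s, hs, hspan⟩ => ⟨⟨s, hspan⟩, hs⟩, fun ⟨s, hs⟩ => ⟨s.1, hs, s.2⟩⟩

namespace Submodule

variable {R M M' : Type*} [Ring R] [AddCommGroup M] [Module R M] [AddCommGroup M'] [Module R M']

theorem eq_inf_ker_sup_of_le_of_map_le (ψ : M →ₗ[R] M') {N P : Submodule R M} (hPN : P ≤ N)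
    (hNP : N.map ψ ≤ P.map ψ) : N = N ⊓ LinearMap.ker ψ ⊔ P := by
  rw [LinearMap.map_le_map_iff] at hNP
  rw [sup_comm, inf_comm N, ← sup_inf_assoc_of_le _ hPN, inf_eq_right.mpr hNP]

theorem spanFinrank_le_spanFinrank_inf_ker_add_spanFinrank_map (ψ : M →ₗ[R] M')
    {N : Submodule R M} (hker : (N ⊓ LinearMap.ker ψ).FG) (hmap : (N.map ψ).FG) :
    N.spanFinrank ≤ (N ⊓ LinearMap.ker ψ).spanFinrank + (N.map ψ).spanFinrank := by
  classical
  obtain ⟨s, hs, hspan_s⟩ := hker.exists_span_finset_card_eq_spanFinrank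
  obtain ⟨t, ht, hspan_t⟩ := hmap.exists_span_finset_card_eq_spanFinrank
  have ht_sub : ∀ y ∈ t, ∃ x ∈ N, ψ x = y := fun y hy =>
    (hspan_t ▸ subset_span hy : y ∈ N.map ψ)
  set lift := t.image (Function.invFunOn ψ N)
  have hlift_sub : span R (lift : Set M) ≤ N := by
    rw [span_le]
    simp only [lift, Finset.coe_image]
    rintro _ ⟨y, hy, rfl⟩
    exact Function.invFunOn_mem (ht_sub y hy)
  have hlift_map : N.map ψ ≤ (span R (lift : Set M)).map ψ := by
    rw [map_span, ← hspan_t]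
    exact span_mono fun y hy =>
      ⟨_, Finset.mem_image_of_mem _ hy, Function.invFunOn_eq (ht_sub y hy)⟩
  have hspan : span R ((s ∪ lift : Finset M) : Set M) = N := by
    rw [Finset.coe_union, span_union, hspan_s,
      ← eq_inf_ker_sup_of_le_of_map_le ψ hlift_sub hlift_map]
  calc N.spanFinrank ≤ (s ∪ lift).card := by
        have := spanFinrank_span_le_ncard_of_finite (R := R) (s ∪ lift).finite_toSet
        rwa [hspan, Set.ncard_coe_finset] at this
    _ ≤ s.card + t.card := (Finset.card_union_le _ _).trans (by gcongr; exact Finset.card_image_le)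
    _ = _ := by rw [hs, ht]

end Submodule

theorem flength_eq_toNat_length (R M : Type*) [Ring R] [AddCommGroup M] [Module R M] :
    flength R M = (Module.length R M).toNat := by
  rw [flength, ← Module.coe_length, WithBot.unbotD_coe]

section ShortExact

open Submodule

variable {R L₁ L L₂ : Type*} [Ring R] [AddCommGroup L₁] [Module R L₁]
    [AddCommGroup L] [Module R L] [AddCommGroup L₂] [Module R L₂]
    {f : L₁ →ₗ[R] L} {g : L →ₗ[R] L₂}

theorem flength_eq_add_of_exact (hf : Function.Injective f) (hg : Function.Surjective g)
    (hfg : Function.Exact f g) (hL : IsFiniteLength R L) :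
    flength R L = flength R L₁ + flength R L₂ := by
  rw [flength_eq_toNat_length, flength_eq_toNat_length, flength_eq_toNat_length,
    Module.length_eq_add_of_exact f g hf hg hfg, ENat.toNat_add]
  · exact Module.length_ne_top_iff.mpr (hL.of_injective hf)
  · exact Module.length_ne_top_iff.mpr (hL.of_surjective hg)

theorem Submodule.injective_mapQ_comap (M : Submodule R L) :
    Function.Injective (mapQ (M.comap f) M f le_rfl) := by
  rw [← LinearMap.ker_eq_bot, ker_mapQ, mkQ_map_self]

theorem Submodule.surjective_mapQ_map (hg : Function.Surjective g) (M : Submodule R L) :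
    Function.Surjective (mapQ M (M.map g) g (le_comap_map g M)) := by
  rw [← LinearMap.range_eq_top, range_mapQ, LinearMap.range_eq_top.mpr hg, map_top, range_mkQ]

theorem Function.Exact.exact_mapQ_comap_map (hfg : Function.Exact f g) (M : Submodule R L) :
    Function.Exact (mapQ (M.comap f) M f le_rfl) (mapQ M (M.map g) g (le_comap_map g M)) :=
  (hfg.exact_mapQ_iff _ _).mpr inf_le_right

theorem Submodule.spanFinrank_le_spanFinrank_comap_add_spanFinrank_map [IsNoetherian R L]
    (hf : Function.Injective f) (hfg : Function.Exact f g) (M : Submodule R L) :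
    M.spanFinrank ≤ (M.comap f).spanFinrank + (M.map g).spanFinrank := by
  have hker : M ⊓ LinearMap.ker g = (M.comap f).map f := by
    rw [hfg.linearMap_ker_eq, Submodule.map_comap_eq, inf_comm]
  have h := M.spanFinrank_le_spanFinrank_inf_ker_add_spanFinrank_map g
    (IsNoetherian.noetherian _) ((IsNoetherian.noetherian M).map g)
  rwa [hker, Submodule.spanFinrank_map_eq_of_injective f hf] at h

end ShortExact

section Depth

variable {R L₁ L L₂ : Type*} [CommRing R] [AddCommGroup L₁] [Module R L₁]
    [AddCommGroup L] [Module R L] [AddCommGroup L₂] [Module R L₂]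

theorem Submodule.map_le_smul_top_of_surjective {g : L →ₗ[R] L₂} (hg : Function.Surjective g)
    {I : Ideal R} {M : Submodule R L} (hM : M ≤ I • ⊤) : M.map g ≤ I • ⊤ := by
  calc M.map g ≤ (I • ⊤ : Submodule R L).map g := Submodule.map_mono hM
    _ = I • ⊤ := by rw [Submodule.map_smul'', Submodule.map_top, LinearMap.range_eq_top.mpr hg]

theorem exists_comap_le_pow_smul_top [IsNoetherianRing R] [Module.Finite R L] (I : Ideal R)
    {f : L₁ →ₗ[R] L} (hf : Function.Injective f) :
    ∃ k, ∀ n (M : Submodule R L), M ≤ I ^ (n + k) • ⊤ → M.comap f ≤ I ^ n • ⊤ := by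
  obtain ⟨k, hk⟩ := I.exists_pow_inf_eq_pow_smul (LinearMap.range f)
  refine ⟨k, fun n M hM => ?_⟩
  rw [← Submodule.map_le_map_iff_of_injective hf, Submodule.map_comap_eq, Submodule.map_smul'',
    Submodule.map_top]
  calc LinearMap.range f ⊓ M ≤ I ^ (n + k) • ⊤ ⊓ LinearMap.range f :=
        le_inf (inf_le_right.trans hM) inf_le_left
    _ = I ^ n • (I ^ k • ⊤ ⊓ LinearMap.range f) := by rw [hk _ le_add_self, Nat.add_sub_cancel]
    _ ≤ I ^ n • LinearMap.range f := smul_mono_right _ inf_le_right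

end Depth

theorem stmt_19_general (A : Type*) [CommRing A] [IsLocalRing A] [IsNoetherianRing A]
    (L₁ L L₂ : Type*) [AddCommGroup L₁] [Module A L₁]
    [AddCommGroup L] [Module A L] [Module.Finite A L]
    [AddCommGroup L₂] [Module A L₂]
    (f : L₁ →ₗ[A] L) (g : L →ₗ[A] L₂)
    (hf : Function.Injective f) (hg : Function.Surjective g) (hfg : Function.Exact f g)
    (H₁ : ∀ ε : ℝ, 0 < ε → ∃ N₁ : ℕ, ∀ M₁ : Submodule A L₁,
      M₁ ≤ (maximalIdeal A ^ N₁) • (⊤ : Submodule A L₁) → IsFiniteLength A (L₁ ⧸ M₁) →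
      (mu A M₁ : ℝ) < ε * (flength A (L₁ ⧸ M₁) : ℝ))
    (H₂ : ∀ ε : ℝ, 0 < ε → ∃ N₂ : ℕ, ∀ M₂ : Submodule A L₂,
      M₂ ≤ (maximalIdeal A ^ N₂) • (⊤ : Submodule A L₂) → IsFiniteLength A (L₂ ⧸ M₂) →
      (mu A M₂ : ℝ) < ε * (flength A (L₂ ⧸ M₂) : ℝ)) :
    ∀ ε : ℝ, 0 < ε → ∃ N : ℕ, ∀ M : Submodule A L,
      M ≤ (maximalIdeal A ^ N) • (⊤ : Submodule A L) → IsFiniteLength A (L ⧸ M) →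
      (mu A M : ℝ) < ε * (flength A (L ⧸ M) : ℝ) := by
  intro ε hε
  obtain ⟨N₁, h₁⟩ := H₁ ε hε
  obtain ⟨N₂, h₂⟩ := H₂ ε hε
  obtain ⟨k, hk⟩ := exists_comap_le_pow_smul_top (maximalIdeal A) hf
  refine ⟨max (N₁ + k) N₂, fun M hM hfin => ?_⟩
  have hdeep {n : ℕ} (hn : n ≤ max (N₁ + k) N₂) : M ≤ maximalIdeal A ^ n • ⊤ :=
    hM.trans (Submodule.smul_mono_left (Ideal.pow_le_pow_right hn))
  have hinj := M.injective_mapQ_comap (f := f)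
  have hsurj := M.surjective_mapQ_map hg
  have hlen := flength_eq_add_of_exact hinj hsurj (hfg.exact_mapQ_comap_map M) hfin
  have hmu : (mu A M : ℝ) ≤ mu A (M.comap f) + mu A (M.map g) := by
    simp only [mu_eq_spanFinrank]
    exact_mod_cast M.spanFinrank_le_spanFinrank_comap_add_spanFinrank_map hf hfg
  calc (mu A M : ℝ) ≤ mu A (M.comap f) + mu A (M.map g) := hmu
    _ < ε * flength A (L₁ ⧸ M.comap f) + ε * flength A (L₂ ⧸ M.map g) :=
      add_lt_add (h₁ _ (hk N₁ M (hdeep (le_max_left _ _))) (hfin.of_injective hinj))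
        (h₂ _ (Submodule.map_le_smul_top_of_surjective hg (hdeep (le_max_right _ _)))
          (hfin.of_surjective hsurj))
    _ = ε * flength A (L ⧸ M) := by rw [hlen]; push_cast; ring

/-- the "few generators relative to colength for deep submodules" property
passes across a short exact sequence `0 → L₁ → L → L₂ → 0`. -/
theorem stmt_19 (A : Type*) [CommRing A] [IsLocalRing A] [IsNoetherianRing A]
    (L₁ L L₂ : Type*) [AddCommGroup L₁] [Module A L₁] [Module.Finite A L₁]
    [AddCommGroup L] [Module A L] [Module.Finite A L]
    [AddCommGroup L₂] [Module A L₂] [Module.Finite A L₂]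
    (f : L₁ →ₗ[A] L) (g : L →ₗ[A] L₂)
    (hf : Function.Injective f) (hg : Function.Surjective g) (hfg : Function.Exact f g)
    (H₁ : ∀ ε : ℝ, 0 < ε → ∃ N₁ : ℕ, ∀ M₁ : Submodule A L₁,
      M₁ ≤ (maximalIdeal A ^ N₁) • (⊤ : Submodule A L₁) → IsFiniteLength A (L₁ ⧸ M₁) →
      (mu A M₁ : ℝ) < ε * (flength A (L₁ ⧸ M₁) : ℝ))
    (H₂ : ∀ ε : ℝ, 0 < ε → ∃ N₂ : ℕ, ∀ M₂ : Submodule A L₂,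
      M₂ ≤ (maximalIdeal A ^ N₂) • (⊤ : Submodule A L₂) → IsFiniteLength A (L₂ ⧸ M₂) →
      (mu A M₂ : ℝ) < ε * (flength A (L₂ ⧸ M₂) : ℝ)) :
    ∀ ε : ℝ, 0 < ε → ∃ N : ℕ, ∀ M : Submodule A L,
      M ≤ (maximalIdeal A ^ N) • (⊤ : Submodule A L) → IsFiniteLength A (L ⧸ M) →
      (mu A M : ℝ) < ε * (flength A (L ⧸ M) : ℝ) :=
  stmt_19_general A L₁ L L₂ f g hf hg hfg H₁ H₂
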